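/- Let T and T̃ be quantum channels on M_d related by T(ρ) = A · T̃(B ρ B†) · A† for all ρ, where A, B ∈ M_d are invertible matrices. Then T is divisible if and only if T̃ is divisible; equivalently, T is indivisible if and only if T̃ is indivisible. -/

import Mathlib

open Matrix
open scoped Kronecker ComplexOrder

noncomputable section

/-- `Mat d` is the space `M_d` of `d × d` complex matrices. -/
abbrev Mat (d : ℕ) := Matrix (Fin d) (Fin d) ℂ

/-- The Choi matrix `C(T) = Σ_{i,j} E_{ij} ⊗ T(E_{ij})` of a linear map on `M_d`. -/
def choi {d : ℕ} (T : Mat d →ₗ[ℂ] Mat d) :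
    Matrix (Fin d × Fin d) (Fin d × Fin d) ℂ :=
  ∑ i : Fin d, ∑ j : Fin d,
    (single i j (1 : ℂ)) ⊗ₖ T (single i j (1 : ℂ))

/-- A linear map on `M_d` is trace-preserving if it preserves the trace. -/
def IsTracePreserving {d : ℕ} (T : Mat d →ₗ[ℂ] Mat d) : Prop :=
  ∀ A : Mat d, (T A).trace = A.trace

/-- A linear map on `M_d` is completely positive if its Choi matrix is positive
semidefinite. -/
def IsCompletelyPositive {d : ℕ} (T : Mat d →ₗ[ℂ] Mat d) : Prop :=
  (choi T).PosSemidef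

/-- A quantum channel is a completely positive trace-preserving linear map. -/
def IsChannel {d : ℕ} (T : Mat d →ₗ[ℂ] Mat d) : Prop :=
  IsTracePreserving T ∧ IsCompletelyPositive T

/-- A unitary conjugation is a map of the form `A ↦ U * A * Uᴴ` with `U` unitary. -/
def IsUnitaryConj {d : ℕ} (T : Mat d →ₗ[ℂ] Mat d) : Prop :=
  ∃ U : Mat d, U ∈ Matrix.unitaryGroup (Fin d) ℂ ∧ ∀ A : Mat d, T A = U * A * Uᴴ

/-- A channel `T` is divisible if it is a composition of two channels, neither of which
is a unitary conjugation. -/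
def IsDivisible {d : ℕ} (T : Mat d →ₗ[ℂ] Mat d) : Prop :=
  ∃ T₁ T₂ : Mat d →ₗ[ℂ] Mat d, IsChannel T₁ ∧ IsChannel T₂ ∧
    ¬IsUnitaryConj T₁ ∧ ¬IsUnitaryConj T₂ ∧ T = T₁ ∘ₗ T₂

/-!
Write `Φ_M ρ = M ρ Mᴴ`, so that `T = Φ_A ∘ T' ∘ Φ_B` and, symmetrically,
`T' = Φ_{A⁻¹} ∘ T ∘ Φ_{B⁻¹}`. If `T = T₁ ∘ T₂` with channels `Tᵢ`, then `S = Φ_{A⁻¹} ∘ T₁` and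
`T₂ ∘ Φ_{B⁻¹}` are completely positive and compose to `T'`, but need not be trace-preserving.
Since `T₁` is trace-preserving, `S(v vᴴ) ≠ 0` for `v ≠ 0`, so `S†(1)` is positive definite;
writing `S†(1) = Cᴴ C`, the filter `Y = C⁻¹` makes `S ∘ Φ_Y` trace-preserving, and then
`Φ_{Y⁻¹} ∘ T₂ ∘ Φ_{B⁻¹}` is trace-preserving because `T'` is. Neither new factor is a unitary
conjugation: otherwise `T₁` (resp. `T₂`) would be a trace-preserving map `Φ_K`, which forces `K`
to be unitary.
-/

section ConjMap

variable {n : Type*} [Fintype n] [DecidableEq n]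

def conjMap {R : Type*} [CommSemiring R] [StarRing R] :
    Matrix n n R →* Module.End R (Matrix n n R) where
  toFun M := LinearMap.mulRight R Mᴴ ∘ₗ LinearMap.mulLeft R M
  map_one' := by ext; simp
  map_mul' M N := by ext; simp [Matrix.mul_assoc]

@[simp] lemma conjMap_apply {R : Type*} [CommSemiring R] [StarRing R] (M ρ : Matrix n n R) :
    conjMap M ρ = M * ρ * Mᴴ := rfl

variable {R : Type*} [CommRing R] [StarRing R]

lemma conjMap_nonsing_inv_mul_cancel {M : Matrix n n R} (hM : IsUnit M) :
    conjMap M⁻¹ * conjMap M = 1 := by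
  rw [← map_mul, nonsing_inv_mul _ ((isUnit_iff_isUnit_det M).1 hM), map_one]

lemma conjMap_mul_nonsing_inv_cancel {M : Matrix n n R} (hM : IsUnit M) :
    conjMap M * conjMap M⁻¹ = 1 := by
  rw [← map_mul, mul_nonsing_inv _ ((isUnit_iff_isUnit_det M).1 hM), map_one]

end ConjMap

section MatrixLinearMap

variable {m n p q R : Type*} [Fintype m] [Fintype n] [DecidableEq m] [DecidableEq n]
  [CommSemiring R]

lemma LinearMap.apply_eq_sum_single {M : Type*} [AddCommMonoid M] [Module R M]
    (T : Matrix m n R →ₗ[R] M) (ρ : Matrix m n R) :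
    T ρ = ∑ k, ∑ l, ρ k l • T (Matrix.single k l 1) := by
  conv_lhs => rw [matrix_eq_sum_single ρ]
  simp only [map_sum, ← map_smul, smul_single, smul_eq_mul, mul_one]

lemma LinearMap.apply_apply_eq_sum_single (T : Matrix m n R →ₗ[R] Matrix p q R)
    (ρ : Matrix m n R) (a : p) (b : q) :
    T ρ a b = ∑ k, ∑ l, ρ k l * T (Matrix.single k l 1) a b := by
  simp [T.apply_eq_sum_single ρ, Matrix.sum_apply]

end MatrixLinearMap

lemma dotProduct_mulVec_eq_trace_mul_vecMulVec {n R : Type*} [Fintype n] [CommSemiring R]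
    [StarRing R] (M : Matrix n n R) (x : n → R) :
    star x ⬝ᵥ M *ᵥ x = (M * vecMulVec x (star x)).trace := by
  simp only [dotProduct, mulVec, trace, diag, Matrix.mul_apply, vecMulVec_apply, Pi.star_apply,
    Finset.mul_sum]
  exact Fintype.sum_congr _ _ fun k => Fintype.sum_congr _ _ fun l => by ring

section Channels

variable {d : ℕ}

lemma choi_apply (T : Mat d →ₗ[ℂ] Mat d) (i a j b : Fin d) :
    choi T (i, a) (j, b) = T (single i j 1) a b := by
  simp [choi, Matrix.sum_apply, kroneckerMap_apply, single_apply, ite_and]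

lemma choi_conjMap_mul (M : Mat d) (T : Mat d →ₗ[ℂ] Mat d) :
    choi (conjMap M * T) = (1 ⊗ₖ M) * choi T * (1 ⊗ₖ M)ᴴ := by
  simp only [choi, Finset.mul_sum, Finset.sum_mul, conjTranspose_kronecker, ← mul_kronecker_mul,
    Module.End.mul_apply, conjMap_apply, Matrix.one_mul, Matrix.mul_one, conjTranspose_one]

lemma choi_mul_conjMap (T : Mat d →ₗ[ℂ] Mat d) (N : Mat d) :
    choi (T * conjMap N) = (Nᵀ ⊗ₖ 1) * choi T * (Nᵀ ⊗ₖ 1)ᴴ := by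
  ext ⟨i, a⟩ ⟨j, b⟩
  rw [choi_apply, Module.End.mul_apply, conjMap_apply, T.apply_apply_eq_sum_single]
  simp only [Matrix.mul_apply, Fintype.sum_prod_type, kroneckerMap_apply, transpose_apply,
    one_apply, conjTranspose_apply, choi_apply, single_apply, ite_and, mul_ite, ite_mul, mul_one,
    mul_zero, zero_mul, Finset.sum_ite_eq, Finset.mem_univ, ↓reduceIte, RCLike.star_def,
    apply_ite (starRingEnd ℂ), map_zero, Finset.sum_mul]
  rw [Finset.sum_comm]
  simp only [mul_right_comm]

lemma IsCompletelyPositive.conjMap_mul {T : Mat d →ₗ[ℂ] Mat d} (hT : IsCompletelyPositive T)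
    (M : Mat d) : IsCompletelyPositive (conjMap M * T) := by
  rw [IsCompletelyPositive, choi_conjMap_mul]
  exact hT.mul_mul_conjTranspose_same _

lemma IsCompletelyPositive.mul_conjMap {T : Mat d →ₗ[ℂ] Mat d} (hT : IsCompletelyPositive T)
    (N : Mat d) : IsCompletelyPositive (T * conjMap N) := by
  rw [IsCompletelyPositive, choi_mul_conjMap]
  exact hT.mul_mul_conjTranspose_same _

lemma IsCompletelyPositive.posSemidef_map_vecMulVec {T : Mat d →ₗ[ℂ] Mat d}
    (hT : IsCompletelyPositive T) (v : Fin d → ℂ) :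
    (T (vecMulVec v (star v))).PosSemidef := by
  let W : Matrix (Fin d × Fin d) (Fin d) ℂ := of fun p b => star (v p.1) * (1 : Mat d) p.2 b
  have hW : T (vecMulVec v (star v)) = Wᴴ * choi T * W := by
    ext a b
    rw [T.apply_apply_eq_sum_single]
    simp only [W, Matrix.mul_apply, Fintype.sum_prod_type, conjTranspose_apply, of_apply,
      one_apply, choi_apply, vecMulVec_apply, Pi.star_apply, RCLike.star_def, mul_ite, mul_one,
      mul_zero, ite_mul, zero_mul, apply_ite (starRingEnd ℂ), RingHomCompTriple.comp_apply,
      RingHom.id_apply, map_zero, Finset.sum_ite_eq', Finset.mem_univ, ↓reduceIte, Finset.sum_mul]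
    rw [Finset.sum_comm]
    simp only [mul_right_comm]
  rw [hW]
  exact hT.conjTranspose_mul_mul_same W

lemma IsCompletelyPositive.conjTranspose_map_single {T : Mat d →ₗ[ℂ] Mat d}
    (hT : IsCompletelyPositive T) (i j : Fin d) :
    (T (single i j 1))ᴴ = T (single j i 1) := by
  ext a b
  rw [conjTranspose_apply, ← choi_apply, ← choi_apply, ← hT.1.apply, star_star]

/-- The dual map of `S` evaluated at the identity, `S†(1)`. -/
def adjointOne (S : Mat d →ₗ[ℂ] Mat d) : Mat d :=
  of fun k l => (S (single l k 1)).trace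

lemma trace_adjointOne_mul (S : Mat d →ₗ[ℂ] Mat d) (σ : Mat d) :
    (adjointOne S * σ).trace = (S σ).trace := by
  rw [S.apply_eq_sum_single σ]
  simp only [trace_sum, trace_smul, smul_eq_mul]
  simp only [trace, diag, Matrix.mul_apply, adjointOne, of_apply]
  rw [Finset.sum_comm]
  exact Fintype.sum_congr _ _ fun k => Fintype.sum_congr _ _ fun l => mul_comm _ _

lemma IsCompletelyPositive.isHermitian_adjointOne {S : Mat d →ₗ[ℂ] Mat d}
    (hS : IsCompletelyPositive S) : (adjointOne S).IsHermitian := by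
  ext k l
  simp only [conjTranspose_apply, adjointOne, of_apply, ← trace_conjTranspose,
    hS.conjTranspose_map_single]

lemma IsCompletelyPositive.posDef_adjointOne {S : Mat d →ₗ[ℂ] Mat d}
    (hS : IsCompletelyPositive S) (hfaithful : ∀ x ≠ 0, S (vecMulVec x (star x)) ≠ 0) :
    (adjointOne S).PosDef := by
  refine .of_dotProduct_mulVec_pos hS.isHermitian_adjointOne fun x hx => ?_
  rw [dotProduct_mulVec_eq_trace_mul_vecMulVec, trace_adjointOne_mul]
  have hpsd := hS.posSemidef_map_vecMulVec x
  exact hpsd.trace_nonneg.lt_of_ne' (hpsd.trace_eq_zero_iff.not.2 (hfaithful x hx))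

open scoped MatrixOrder in
lemma IsCompletelyPositive.exists_isTracePreserving_mul_conjMap {S : Mat d →ₗ[ℂ] Mat d}
    (hS : IsCompletelyPositive S) (hfaithful : ∀ x ≠ 0, S (vecMulVec x (star x)) ≠ 0) :
    ∃ Y : Mat d, IsUnit Y ∧ IsTracePreserving (S * conjMap Y) := by
  have hX := hS.posDef_adjointOne hfaithful
  obtain ⟨C, hC⟩ := CStarAlgebra.nonneg_iff_eq_star_mul_self.mp hX.posSemidef.nonneg
  have hCunit : IsUnit C := isUnit_of_mul_isUnit_right (hC ▸ hX.isUnit)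
  have hCC : C * C⁻¹ = 1 := mul_nonsing_inv _ ((isUnit_iff_isUnit_det C).1 hCunit)
  refine ⟨C⁻¹, isUnit_nonsing_inv_iff.2 hCunit, fun ρ => ?_⟩
  calc (S (C⁻¹ * ρ * C⁻¹ᴴ)).trace = (Cᴴ * C * (C⁻¹ * ρ * C⁻¹ᴴ)).trace := by
        rw [← trace_adjointOne_mul, hC, star_eq_conjTranspose]
    _ = (Cᴴ * (C * C⁻¹) * ρ * C⁻¹ᴴ).trace := by simp only [Matrix.mul_assoc]
    _ = ((C * C⁻¹)ᴴ * ρ).trace := by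
        rw [hCC, Matrix.mul_one, trace_mul_cycle, ← conjTranspose_mul, hCC]
    _ = ρ.trace := by rw [hCC, conjTranspose_one, Matrix.one_mul]

lemma IsTracePreserving.map_ne_zero {T : Mat d →ₗ[ℂ] Mat d} (hT : IsTracePreserving T)
    {ρ : Mat d} (hρ : ρ.trace ≠ 0) : T ρ ≠ 0 := fun h =>
  hρ (by rw [← hT ρ, h, trace_zero])

lemma IsTracePreserving.isUnitaryConj_conjMap {K : Mat d}
    (hK : IsTracePreserving (conjMap K)) : IsUnitaryConj (conjMap K) := by
  refine ⟨K, ?_, fun _ => rfl⟩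
  rw [mem_unitaryGroup_iff', star_eq_conjTranspose, ext_iff_trace_mul_left]
  intro ρ
  rw [Matrix.mul_one, ← hK ρ, conjMap_apply, trace_mul_cycle, trace_mul_comm, Matrix.mul_assoc]

lemma IsTracePreserving.isUnitaryConj_of_conjMap_mul_mul {T : Mat d →ₗ[ℂ] Mat d}
    (hT : IsTracePreserving T) {M N : Mat d} (hM : IsUnit M) (hN : IsUnit N)
    (h : IsUnitaryConj (conjMap M * T * conjMap N)) : IsUnitaryConj T := by
  obtain ⟨U, -, hU⟩ := h
  have hU' : conjMap M * T * conjMap N = conjMap U := LinearMap.ext hU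
  have hT_eq : T = conjMap (M⁻¹ * U * N⁻¹) := by
    rw [map_mul, map_mul, ← hU']
    simp only [← mul_assoc, conjMap_nonsing_inv_mul_cancel hM, one_mul]
    rw [mul_assoc, conjMap_mul_nonsing_inv_cancel hN, mul_one]
  rw [hT_eq] at hT ⊢
  exact hT.isUnitaryConj_conjMap

lemma IsDivisible.conjMap_mul_mul {T : Mat d →ₗ[ℂ] Mat d} (hT : IsDivisible T) {M N : Mat d}
    (hM : IsUnit M) (hN : IsUnit N) (hTP : IsTracePreserving (conjMap M * T * conjMap N)) :
    IsDivisible (conjMap M * T * conjMap N) := by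
  obtain ⟨T₁, T₂, h₁, h₂, hu₁, hu₂, rfl⟩ := hT
  have hfaithful : ∀ x ≠ 0, (conjMap M * T₁) (vecMulVec x (star x)) ≠ 0 := by
    intro x hx
    have hinj := ((Module.End.isUnit_iff _).1 (hM.map conjMap)).injective
    refine (hinj.ne_iff' (map_zero _)).2 (h₁.1.map_ne_zero ?_)
    simpa [trace_vecMulVec] using hx
  obtain ⟨Y, hY, hTP₁⟩ := (h₁.2.conjMap_mul M).exists_isTracePreserving_mul_conjMap hfaithful
  set T₁' := conjMap M * T₁ * conjMap Y
  set T₂' := conjMap Y⁻¹ * T₂ * conjMap N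
  have hcomp : conjMap M * (T₁ ∘ₗ T₂) * conjMap N = T₁' ∘ₗ T₂' := by
    calc conjMap M * (T₁ * T₂) * conjMap N
        = conjMap M * T₁ * (conjMap Y * conjMap Y⁻¹) * T₂ * conjMap N := by
          simp only [conjMap_mul_nonsing_inv_cancel hY, mul_one, mul_assoc]
      _ = T₁' * T₂' := by simp only [T₁', T₂', mul_assoc]
  have hTP₂ : IsTracePreserving T₂' := fun ρ => by
    rw [← hTP₁ (T₂' ρ), ← LinearMap.comp_apply, ← hcomp, hTP]
  refine ⟨T₁', T₂', ⟨hTP₁, (h₁.2.conjMap_mul M).mul_conjMap Y⟩,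
    ⟨hTP₂, (h₂.2.conjMap_mul _).mul_conjMap N⟩, fun h => hu₁ ?_, fun h => hu₂ ?_, hcomp⟩
  · exact h₁.1.isUnitaryConj_of_conjMap_mul_mul hM hY h
  · exact h₂.1.isUnitaryConj_of_conjMap_mul_mul (isUnit_nonsing_inv_iff.2 hY) hN h

end Channels

/-- if two channels `T` and `T'` on `M_d` are related by invertible
Kraus rank-one filtering operations, `T(ρ) = A · T'(B ρ Bᴴ) · Aᴴ` with `A, B`
invertible, then `T` is divisible iff `T'` is divisible (equivalently, `T` is
indivisible iff `T'` is indivisible). -/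
theorem divisible_iff_of_filtering {d : ℕ}
    (T T' : Mat d →ₗ[ℂ] Mat d) (hT : IsChannel T) (hT' : IsChannel T')
    (A B : Mat d) (hA : IsUnit A) (hB : IsUnit B)
    (hrel : ∀ ρ : Mat d, T ρ = A * T' (B * ρ * Bᴴ) * Aᴴ) :
    (IsDivisible T ↔ IsDivisible T') ∧ (¬IsDivisible T ↔ ¬IsDivisible T') := by
  have hT_eq : T = conjMap A * T' * conjMap B := LinearMap.ext hrel
  have hT'_eq : T' = conjMap A⁻¹ * T * conjMap B⁻¹ := by
    rw [hT_eq]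
    simp only [← mul_assoc, conjMap_nonsing_inv_mul_cancel hA, one_mul]
    rw [mul_assoc, conjMap_mul_nonsing_inv_cancel hB, mul_one]
  have hdiv : IsDivisible T ↔ IsDivisible T' := by
    constructor
    · intro h
      rw [hT'_eq] at hT' ⊢
      exact h.conjMap_mul_mul (isUnit_nonsing_inv_iff.2 hA) (isUnit_nonsing_inv_iff.2 hB) hT'.1
    · intro h
      rw [hT_eq] at hT ⊢
      exact h.conjMap_mul_mul hA hB hT.1
  exact ⟨hdiv, hdiv.not⟩
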